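/- Let F be a finite field with q elements, and let f, g : F^n → F be linear functions with f ≠ g. Suppose m i.i.d. noisy examples (x_i, b_i) are drawn with x_i uniform on F^n and b_i = f(x_i) with probability 1−η, else uniform on F∖{f(x_i)}, with η ≤ η_b < 1 − 1/q. If m ≥ C·log(2/δ)/(1 − η_b − 1/q)² for a suitable absolute constant C, then with probability at least 1−δ, the empirical agreement rate #{i : f(x_i)=b_i}/m exceeds #{i : g(x_i)=b_i}/m. -/

import Mathlib

open Finset

theorem aux_exp_le (u : ℝ) (h : |u| ≤ 1) : Real.exp u ≤ 1 + u + u^2 := by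
  have := Real.exp_bound h (n := 2) (by norm_num)
  have h2 : ∑ i ∈ range 2, u ^ i / i.factorial = 1 + u := by
    simp [Finset.sum_range_succ]
  rw [h2] at this
  norm_num [Nat.factorial] at this
  have hb := abs_le.1 this
  nlinarith [sq_abs u, hb.2]

theorem aux_ker_card {F : Type} [Field F] [Fintype F] [DecidableEq F] {n : ℕ}
    (d : Fin n → F) (j₀ : Fin n) (hj : d j₀ ≠ 0) :
    (univ.filter fun x : Fin n → F => ∑ j, d j * x j = 0).card * Fintype.card F
      ≤ Fintype.card F ^ n := by
  set q := Fintype.card F with hq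
  have hstep : (univ.filter fun x : Fin n → F => ∑ j, d j * x j = 0).card ≤ q ^ (n - 1) := by
    have hinj : Set.InjOn (fun x : Fin n → F => Function.update x j₀ 0)
        ↑(univ.filter fun x : Fin n → F => ∑ j, d j * x j = 0) := by
      intro x hx y hy hxy
      simp only [coe_filter, Set.mem_setOf_eq, mem_univ, true_and] at hx hy
      have hoff : ∀ i, i ≠ j₀ → x i = y i := by
        intro i hi
        have := congrFun hxy i
        simpa [Function.update, hi] using this
      have hsum : ∀ z : Fin n → F, ∑ j, d j * z j =
          d j₀ * z j₀ + ∑ j ∈ univ.erase j₀, d j * z j :=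
        fun z => (Finset.add_sum_erase univ (fun j => d j * z j) (mem_univ j₀)).symm
      have he : ∑ j ∈ univ.erase j₀, d j * x j = ∑ j ∈ univ.erase j₀, d j * y j := by
        apply Finset.sum_congr rfl
        intro i hi
        rw [hoff i (Finset.ne_of_mem_erase hi)]
      have hdd : d j₀ * x j₀ = d j₀ * y j₀ := by
        have h1 := hsum x; have h2 := hsum y
        rw [hx] at h1; rw [hy] at h2
        rw [he] at h1
        linear_combination h2 - h1
      have hjj : x j₀ = y j₀ := mul_left_cancel₀ hj hdd
      funext i
      by_cases hi : i = j₀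
      · rw [hi]; exact hjj
      · exact hoff i hi
    have hmaps : ∀ x ∈ (univ.filter fun x : Fin n → F => ∑ j, d j * x j = 0),
        Function.update x j₀ 0 ∈ (univ.filter fun z : Fin n → F => z j₀ = 0) := by
      intro x _
      simp [Function.update]
    have hcard := Finset.card_le_card_of_injOn _ hmaps hinj
    refine hcard.trans (le_of_eq ?_)
    have hT : (univ.filter fun z : Fin n → F => z j₀ = 0) =
        Fintype.piFinset (fun i => if i = j₀ then ({0} : Finset F) else univ) := by
      ext z
      simp only [mem_filter, mem_univ, true_and, Fintype.mem_piFinset]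
      constructor
      · intro h i
        by_cases hi : i = j₀ <;> simp [hi, h]
      · intro h
        have := h j₀
        simpa using this
    rw [hT, Fintype.card_piFinset]
    calc ∏ i, (if i = j₀ then ({0} : Finset F) else univ).card
        = ∏ i, (if i = j₀ then 1 else q) := by
          apply Finset.prod_congr rfl
          intro i _
          by_cases hi : i = j₀ <;> simp [hi, hq]
      _ = q ^ (n - 1) := by
          rw [← Finset.mul_prod_erase univ _ (mem_univ j₀)]
          simp only [if_pos rfl, one_mul]
          rw [Finset.prod_congr rfl (fun i hi => if_neg (Finset.ne_of_mem_erase hi)),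
            Finset.prod_const, Finset.card_erase_of_mem (mem_univ j₀)]
          simp
  calc (univ.filter fun x : Fin n → F => ∑ j, d j * x j = 0).card * q
      ≤ q ^ (n - 1) * q := Nat.mul_le_mul hstep le_rfl
    _ = q ^ n := by
        rw [← pow_succ]
        have : n - 1 + 1 = n := Nat.succ_pred_eq_of_pos j₀.pos
        rw [this]

theorem aux_alg (q r u η ηb : ℝ) (hq : 2 ≤ q) (hr : r ≤ 1/q)
    (hu : u = η/(q-1)) (hη : η ≤ ηb) (hηb : ηb < 1 - 1/q) :
    1 - 1/q - ηb ≤ (1-r)*(1-η-u) := by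
  have hq0 : (0:ℝ) < q := by linarith
  have hq1 : (0:ℝ) < q - 1 := by linarith
  have hb : η * q ≤ q - 1 := by
    have h1 : η < 1 - 1/q := lt_of_le_of_lt hη hηb
    have h2 : (1 - 1/q) * q = q - 1 := by field_simp
    nlinarith
  have hpos : 0 ≤ 1 - η - u := by
    have h3 : 1 - η - u = (q - 1 - η*q)/(q-1) := by rw [hu]; field_simp; ring
    rw [h3]
    apply div_nonneg (by linarith) hq1.le
  have hql : 1 - 1/q ≤ 1 - r := by linarith
  have step := mul_le_mul_of_nonneg_right hql hpos
  have ident : (1 - 1/q)*(1-η-u) = 1 - 1/q - η := by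
    rw [hu]; field_simp; ring
  linarith

set_option maxHeartbeats 1000000 in
/-- Hypothesis separation by empirical agreement.  There is an absolute constant `C`
such that: for distinct linear functions `f(x) = a·x`, `g(x) = c·x` over a finite
field with `q` elements, if `m ≥ C·log(2/δ)/(1 - η_b - 1/q)²` i.i.d. noisy examples
are drawn (each `x_i` uniform on `F^n`, `b_i = f(x_i)` with probability `1-η`, else
uniform on `F∖{f(x_i)}`, where `η ≤ η_b < 1 - 1/q`), then with probability at least
`1 - δ` the empirical agreement count of `f` strictly exceeds that of `g`.
The sample distribution is given by the product of the per-example density `D`. -/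
theorem stmt_16 :
    ∃ C : ℝ, 0 < C ∧
      ∀ {F : Type} [inst : Field F] [inst2 : Fintype F] [inst3 : DecidableEq F]
        (n q m : ℕ) (hq : Fintype.card F = q)
        (a c : Fin n → F) (hac : a ≠ c)
        (η ηb δ : ℝ) (hη0 : 0 ≤ η) (hη : η ≤ ηb) (hηb : ηb < 1 - 1 / q)
        (hδ : 0 < δ) (hδ1 : δ < 1)
        (D : (Fin n → F) × F → ℝ)
        (hD : ∀ p : (Fin n → F) × F,
          D p = (1 / (q : ℝ) ^ n) *
            (if p.2 = ∑ i, a i * p.1 i then 1 - η else η / ((q : ℝ) - 1)))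
        (hm : C * Real.log (2 / δ) / (1 - ηb - 1 / q) ^ 2 ≤ (m : ℝ)),
        1 - δ ≤
          ∑ s ∈ Finset.univ.filter
              (fun s : Fin m → (Fin n → F) × F =>
                (Finset.univ.filter
                    (fun i => (∑ j, c j * (s i).1 j) = (s i).2)).card <
                (Finset.univ.filter
                    (fun i => (∑ j, a j * (s i).1 j) = (s i).2)).card),
            ∏ i, D (s i) := by
  refine ⟨4, by norm_num, ?_⟩
  intro F _ _ _ n q m hq a c hac η ηb δ hη0 hη hηb hδ hδ1 D hD hm
  -- basic numeric facts
  have hq2 : 2 ≤ q := by rw [← hq]; exact Fintype.one_lt_card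
  have hqR : (2:ℝ) ≤ (q:ℝ) := by exact_mod_cast hq2
  have hq0R : (0:ℝ) < q := by linarith
  have hq1R : (0:ℝ) < (q:ℝ) - 1 := by linarith
  have hqinv : (0:ℝ) < 1/(q:ℝ) := by positivity
  have hηb1 : ηb < 1 := by linarith
  have hη1 : η < 1 := lt_of_le_of_lt hη hηb1
  have hηb0 : 0 ≤ ηb := le_trans hη0 hη
  set ε : ℝ := 1 - ηb - 1/(q:ℝ) with hεdef
  have hε0 : 0 < ε := by simp only [hεdef]; linarith
  have hε1 : ε ≤ 1 := by simp only [hεdef]; linarith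
  set t : ℝ := ε/2 with htdef
  have ht0 : 0 ≤ t := by positivity
  have ht2 : t ≤ 1/2 := by simp only [htdef]; linarith
  have hNn : (0:ℝ) < (q:ℝ)^n := by positivity
  have hcardfun : Fintype.card (Fin n → F) = q^n := by
    simp [Fintype.card_fun, hq]
  have hDnn : ∀ p, 0 ≤ D p := by
    intro p
    rw [hD]
    apply mul_nonneg (by positivity)
    split
    · linarith
    · positivity
  -- inner sum over b
  have hsum_b : ∀ (v : F) (A B : ℝ), (∑ b : F, if b = v then A else B) = A + ((q:ℝ)-1) * B := by
    intro v A B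
    rw [← Finset.add_sum_erase univ _ (mem_univ v), if_pos rfl,
      Finset.sum_congr rfl (fun b hb => if_neg (Finset.ne_of_mem_erase hb)),
      Finset.sum_const, Finset.card_erase_of_mem (mem_univ v), card_univ, hq, nsmul_eq_mul]
    congr 2
    rw [Nat.cast_sub (by omega), Nat.cast_one]
  -- total mass
  have hmass : ∑ p : (Fin n → F) × F, D p = 1 := by
    rw [Fintype.sum_prod_type]
    have hx : ∀ x : Fin n → F, (∑ b : F, D (x, b)) = 1/(q:ℝ)^n := by
      intro x
      simp only [hD]
      rw [← Finset.mul_sum, hsum_b (∑ i, a i * x i) (1-η) (η/((q:ℝ)-1))]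
      have : (1-η) + ((q:ℝ)-1) * (η/((q:ℝ)-1)) = 1 := by field_simp; ring
      rw [this, mul_one]
    rw [Finset.sum_congr rfl (fun x _ => hx x), Finset.sum_const, card_univ, hcardfun,
      nsmul_eq_mul]
    push_cast
    field_simp
  -- agreement sum for a
  have hSa : ∑ p : (Fin n → F) × F,
      D p * (if (∑ j, a j * p.1 j) = p.2 then (1:ℝ) else 0) = 1 - η := by
    rw [Fintype.sum_prod_type]
    have hx : ∀ x : Fin n → F, (∑ b : F, D (x, b) * (if (∑ j, a j * x j) = b then (1:ℝ) else 0))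
        = (1/(q:ℝ)^n) * (1-η) := by
      intro x
      rw [Finset.sum_eq_single (∑ j, a j * x j)]
      · rw [hD]; simp
      · intro b _ hb
        rw [if_neg (fun h => hb h.symm), mul_zero]
      · intro h; exact absurd (mem_univ _) h
    rw [Finset.sum_congr rfl (fun x _ => hx x), Finset.sum_const, card_univ, hcardfun,
      nsmul_eq_mul]
    push_cast
    field_simp
  -- kernel cardinality
  set Kc := (univ.filter fun x : Fin n → F => (∑ j, c j * x j) = (∑ j, a j * x j)).card with hKcdef
  clear_value Kc
  have hKq : Kc * q ≤ q^n := by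
    obtain ⟨j₀, hj⟩ := Function.ne_iff.mp hac
    have hker := aux_ker_card (fun j => a j - c j) j₀ (sub_ne_zero.mpr hj)
    rw [hq] at hker
    have hfe : (univ.filter fun x : Fin n → F => ∑ j, (a j - c j) * x j = 0)
        = (univ.filter fun x : Fin n → F => (∑ j, c j * x j) = (∑ j, a j * x j)) := by
      apply Finset.filter_congr
      intro x _
      have hsub : ∑ j, (a j - c j) * x j = (∑ j, a j * x j) - (∑ j, c j * x j) := by
        rw [← Finset.sum_sub_distrib]
        apply Finset.sum_congr rfl
        intro j _
        ring
      rw [hsub, sub_eq_zero]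
      exact ⟨fun h => h.symm, fun h => h.symm⟩
    rw [hfe] at hker
    rw [hKcdef]
    exact hker
  have hKle : Kc ≤ q^n := by
    have : Kc ≤ Fintype.card (Fin n → F) := by
      rw [hKcdef]
      exact le_trans (Finset.card_le_card (Finset.filter_subset _ _)) (by rw [card_univ])
    rw [hcardfun] at this
    exact this
  -- agreement sum for c
  have hSc : ∑ p : (Fin n → F) × F,
      D p * (if (∑ j, c j * p.1 j) = p.2 then (1:ℝ) else 0)
      = (1/(q:ℝ)^n) * ((Kc:ℝ)*(1-η) + ((q:ℝ)^n-(Kc:ℝ))*(η/((q:ℝ)-1))) := by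
    rw [Fintype.sum_prod_type]
    have hx : ∀ x : Fin n → F, (∑ b : F, D (x, b) * (if (∑ j, c j * x j) = b then (1:ℝ) else 0))
        = (1/(q:ℝ)^n) * (if (∑ j, c j * x j) = (∑ i, a i * x i) then 1-η else η/((q:ℝ)-1)) := by
      intro x
      rw [Finset.sum_eq_single (∑ j, c j * x j)]
      · rw [hD]; simp
      · intro b _ hb
        rw [if_neg (fun h => hb h.symm), mul_zero]
      · intro h; exact absurd (mem_univ _) h
    rw [Finset.sum_congr rfl (fun x _ => hx x), ← Finset.mul_sum]
    congr 1
    rw [Finset.sum_ite, Finset.sum_const, Finset.sum_const]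
    have hcompl : (univ.filter fun x : Fin n → F =>
        ¬ ((∑ j, c j * x j) = (∑ i, a i * x i))).card = q^n - Kc := by
      have hh := Finset.card_filter_add_card_filter_not (s := (univ : Finset (Fin n → F)))
        (p := fun x => (∑ j, c j * x j) = (∑ i, a i * x i))
      rw [card_univ, hcardfun] at hh
      rw [hKcdef]
      exact Nat.eq_sub_of_add_eq' hh
    rw [hcompl, nsmul_eq_mul, nsmul_eq_mul]
    have hcast : ((q^n - Kc : ℕ):ℝ) = (q:ℝ)^n - (Kc:ℝ) := by
      rw [Nat.cast_sub hKle]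
      push_cast
      ring
    rw [hcast, ← hKcdef]
  -- expectation of Z
  have hEZ : ε ≤ ∑ p : (Fin n → F) × F,
      D p * ((if (∑ j, a j * p.1 j) = p.2 then (1:ℝ) else 0)
        - (if (∑ j, c j * p.1 j) = p.2 then (1:ℝ) else 0)) := by
    have hsplit : ∑ p : (Fin n → F) × F,
        D p * ((if (∑ j, a j * p.1 j) = p.2 then (1:ℝ) else 0)
          - (if (∑ j, c j * p.1 j) = p.2 then (1:ℝ) else 0))
        = (∑ p : (Fin n → F) × F, D p * (if (∑ j, a j * p.1 j) = p.2 then (1:ℝ) else 0))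
          - ∑ p : (Fin n → F) × F, D p * (if (∑ j, c j * p.1 j) = p.2 then (1:ℝ) else 0) := by
      rw [← Finset.sum_sub_distrib]
      apply Finset.sum_congr rfl
      intro p _
      ring
    rw [hsplit, hSa, hSc]
    have hrle : (Kc:ℝ)/(q:ℝ)^n ≤ 1/(q:ℝ) := by
      rw [div_le_div_iff₀ hNn hq0R]
      have : ((Kc * q : ℕ) : ℝ) ≤ ((q^n : ℕ) : ℝ) := by exact_mod_cast hKq
      push_cast at this
      linarith
    have halg := aux_alg (q:ℝ) ((Kc:ℝ)/(q:ℝ)^n) (η/((q:ℝ)-1)) η ηb hqR hrle rfl hη hηb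
    have hshape : (1-η) - (1/(q:ℝ)^n) * ((Kc:ℝ)*(1-η) + ((q:ℝ)^n-(Kc:ℝ))*(η/((q:ℝ)-1)))
        = (1 - (Kc:ℝ)/(q:ℝ)^n)*(1-η-η/((q:ℝ)-1)) := by
      field_simp
      ring
    rw [hεdef]
    linarith [hshape ▸ halg]
  -- pointwise exponential bound
  have hptw : ∀ p : (Fin n → F) × F,
      Real.exp (-(t * ((if (∑ j, a j * p.1 j) = p.2 then (1:ℝ) else 0)
        - (if (∑ j, c j * p.1 j) = p.2 then (1:ℝ) else 0))))
      ≤ 1 - t * ((if (∑ j, a j * p.1 j) = p.2 then (1:ℝ) else 0)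
        - (if (∑ j, c j * p.1 j) = p.2 then (1:ℝ) else 0)) + t^2 := by
    intro p
    have key : ∀ z : ℝ, z = 1 ∨ z = 0 ∨ z = -1 → Real.exp (-(t*z)) ≤ 1 - t*z + t^2 := by
      intro z hz
      have habs : |(-(t*z))| ≤ 1 := by
        rcases hz with h | h | h <;> rw [h] <;> simp [abs_le] <;> constructor <;> linarith
      have := aux_exp_le (-(t*z)) habs
      have hz2 : z^2 ≤ 1 := by rcases hz with h | h | h <;> rw [h] <;> norm_num
      have ht2' : (-(t*z))^2 ≤ t^2 := by
        have : (-(t*z))^2 = t^2 * z^2 := by ring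
        rw [this]
        nlinarith [sq_nonneg t]
      linarith
    apply key
    by_cases h1 : (∑ j, a j * p.1 j) = p.2 <;> by_cases h2 : (∑ j, c j * p.1 j) = p.2 <;>
      simp [h1, h2]
  -- expectation of the tilted weight
  have hEw : ∑ p : (Fin n → F) × F,
      D p * Real.exp (-(t * ((if (∑ j, a j * p.1 j) = p.2 then (1:ℝ) else 0)
        - (if (∑ j, c j * p.1 j) = p.2 then (1:ℝ) else 0)))) ≤ 1 - ε^2/4 := by
    have step1 : ∑ p : (Fin n → F) × F,
        D p * Real.exp (-(t * ((if (∑ j, a j * p.1 j) = p.2 then (1:ℝ) else 0)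
          - (if (∑ j, c j * p.1 j) = p.2 then (1:ℝ) else 0))))
        ≤ ∑ p : (Fin n → F) × F,
        D p * (1 - t * ((if (∑ j, a j * p.1 j) = p.2 then (1:ℝ) else 0)
          - (if (∑ j, c j * p.1 j) = p.2 then (1:ℝ) else 0)) + t^2) := by
      apply Finset.sum_le_sum
      intro p _
      exact mul_le_mul_of_nonneg_left (hptw p) (hDnn p)
    have step2 : ∑ p : (Fin n → F) × F,
        D p * (1 - t * ((if (∑ j, a j * p.1 j) = p.2 then (1:ℝ) else 0)
          - (if (∑ j, c j * p.1 j) = p.2 then (1:ℝ) else 0)) + t^2)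
        = (1 + t^2) - t * ∑ p : (Fin n → F) × F,
          D p * ((if (∑ j, a j * p.1 j) = p.2 then (1:ℝ) else 0)
            - (if (∑ j, c j * p.1 j) = p.2 then (1:ℝ) else 0)) := by
      have hterm : ∀ p : (Fin n → F) × F,
          D p * (1 - t * ((if (∑ j, a j * p.1 j) = p.2 then (1:ℝ) else 0)
            - (if (∑ j, c j * p.1 j) = p.2 then (1:ℝ) else 0)) + t^2)
          = D p * (1 + t^2) - t * (D p * ((if (∑ j, a j * p.1 j) = p.2 then (1:ℝ) else 0)
            - (if (∑ j, c j * p.1 j) = p.2 then (1:ℝ) else 0))) := by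
        intro p; ring
      rw [Finset.sum_congr rfl (fun p _ => hterm p), Finset.sum_sub_distrib, ← Finset.sum_mul,
        hmass, one_mul, ← Finset.mul_sum]
    rw [step2] at step1
    refine step1.trans ?_
    have hle2 : (1 + t^2) - t * (∑ p : (Fin n → F) × F,
        D p * ((if (∑ j, a j * p.1 j) = p.2 then (1:ℝ) else 0)
          - (if (∑ j, c j * p.1 j) = p.2 then (1:ℝ) else 0))) ≤ (1 + t^2) - t * ε :=
      sub_le_sub_left (mul_le_mul_of_nonneg_left hEZ ht0) _
    have hfin : (1:ℝ) + t^2 - t * ε = 1 - ε^2/4 := by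
      rw [htdef]; ring
    exact hle2.trans_eq hfin
  have hEwnn : 0 ≤ ∑ p : (Fin n → F) × F,
      D p * Real.exp (-(t * ((if (∑ j, a j * p.1 j) = p.2 then (1:ℝ) else 0)
        - (if (∑ j, c j * p.1 j) = p.2 then (1:ℝ) else 0)))) :=
    Finset.sum_nonneg fun p _ => mul_nonneg (hDnn p) (Real.exp_pos _).le
  -- total mass over samples
  have htotal : ∑ s : Fin m → (Fin n → F) × F, ∏ i, D (s i) = 1 := by
    rw [← Fintype.piFinset_univ, ← Finset.prod_univ_sum]
    simp [hmass]
  -- bad event bound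
  have hbad : ∑ s ∈ Finset.univ.filter
      (fun s : Fin m → (Fin n → F) × F =>
        ¬ ((Finset.univ.filter (fun i => (∑ j, c j * (s i).1 j) = (s i).2)).card <
           (Finset.univ.filter (fun i => (∑ j, a j * (s i).1 j) = (s i).2)).card)),
      ∏ i, D (s i) ≤ δ := by
    have hw : ∀ s : Fin m → (Fin n → F) × F, ∀ i : Fin m,
        (0:ℝ) ≤ D (s i) * Real.exp (-(t * ((if (∑ j, a j * (s i).1 j) = (s i).2 then (1:ℝ) else 0)
          - (if (∑ j, c j * (s i).1 j) = (s i).2 then (1:ℝ) else 0)))) :=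
      fun s i => mul_nonneg (hDnn _) (Real.exp_pos _).le
    calc ∑ s ∈ Finset.univ.filter
          (fun s : Fin m → (Fin n → F) × F =>
            ¬ ((Finset.univ.filter (fun i => (∑ j, c j * (s i).1 j) = (s i).2)).card <
               (Finset.univ.filter (fun i => (∑ j, a j * (s i).1 j) = (s i).2)).card)),
          ∏ i, D (s i)
        ≤ ∑ s ∈ Finset.univ.filter
          (fun s : Fin m → (Fin n → F) × F =>
            ¬ ((Finset.univ.filter (fun i => (∑ j, c j * (s i).1 j) = (s i).2)).card <
               (Finset.univ.filter (fun i => (∑ j, a j * (s i).1 j) = (s i).2)).card)),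
          ∏ i, (D (s i) * Real.exp (-(t * ((if (∑ j, a j * (s i).1 j) = (s i).2 then (1:ℝ) else 0)
            - (if (∑ j, c j * (s i).1 j) = (s i).2 then (1:ℝ) else 0))))) := by
          apply Finset.sum_le_sum
          intro s hs
          rw [Finset.mem_filter] at hs
          have hcnt := not_lt.mp hs.2
          rw [Finset.prod_mul_distrib]
          have hprod1 : (1:ℝ) ≤ ∏ i, Real.exp (-(t * ((if (∑ j, a j * (s i).1 j) = (s i).2 then (1:ℝ) else 0)
              - (if (∑ j, c j * (s i).1 j) = (s i).2 then (1:ℝ) else 0)))) := by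
            rw [← Real.exp_sum]
            apply Real.one_le_exp
            have hZa : ∑ i : Fin m, (if (∑ j, a j * (s i).1 j) = (s i).2 then (1:ℝ) else 0)
                = (Finset.univ.filter (fun i => (∑ j, a j * (s i).1 j) = (s i).2)).card := by
              rw [Finset.sum_boole]
            have hZc : ∑ i : Fin m, (if (∑ j, c j * (s i).1 j) = (s i).2 then (1:ℝ) else 0)
                = (Finset.univ.filter (fun i => (∑ j, c j * (s i).1 j) = (s i).2)).card := by
              rw [Finset.sum_boole]
            have hsum : ∑ i : Fin m, -(t * ((if (∑ j, a j * (s i).1 j) = (s i).2 then (1:ℝ) else 0)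
                - (if (∑ j, c j * (s i).1 j) = (s i).2 then (1:ℝ) else 0)))
                = t * (((Finset.univ.filter (fun i => (∑ j, c j * (s i).1 j) = (s i).2)).card : ℝ)
                  - ((Finset.univ.filter (fun i => (∑ j, a j * (s i).1 j) = (s i).2)).card : ℝ)) := by
              rw [Finset.sum_neg_distrib, ← Finset.mul_sum, Finset.sum_sub_distrib, hZa, hZc]
              ring
            rw [hsum]
            exact mul_nonneg ht0 (sub_nonneg.mpr (Nat.cast_le.mpr hcnt))
          calc ∏ i, D (s i) = (∏ i, D (s i)) * 1 := by rw [mul_one]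
            _ ≤ (∏ i, D (s i)) * ∏ i, Real.exp (-(t * ((if (∑ j, a j * (s i).1 j) = (s i).2 then (1:ℝ) else 0)
                - (if (∑ j, c j * (s i).1 j) = (s i).2 then (1:ℝ) else 0)))) := by
                apply mul_le_mul_of_nonneg_left hprod1
                exact Finset.prod_nonneg fun i _ => hDnn _
      _ ≤ ∑ s : Fin m → (Fin n → F) × F,
          ∏ i, (D (s i) * Real.exp (-(t * ((if (∑ j, a j * (s i).1 j) = (s i).2 then (1:ℝ) else 0)
            - (if (∑ j, c j * (s i).1 j) = (s i).2 then (1:ℝ) else 0))))) := by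
          apply Finset.sum_le_sum_of_subset_of_nonneg (Finset.filter_subset _ _)
          intro s _ _
          exact Finset.prod_nonneg fun i _ => hw s i
      _ = (∑ p : (Fin n → F) × F,
          D p * Real.exp (-(t * ((if (∑ j, a j * p.1 j) = p.2 then (1:ℝ) else 0)
            - (if (∑ j, c j * p.1 j) = p.2 then (1:ℝ) else 0)))))^m := by
          rw [← Fintype.piFinset_univ]
          have hpow : (∑ p : (Fin n → F) × F,
              D p * Real.exp (-(t * ((if (∑ j, a j * p.1 j) = p.2 then (1:ℝ) else 0)
                - (if (∑ j, c j * p.1 j) = p.2 then (1:ℝ) else 0)))))^m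
              = ∏ _i : Fin m, ∑ p : (Fin n → F) × F,
              D p * Real.exp (-(t * ((if (∑ j, a j * p.1 j) = p.2 then (1:ℝ) else 0)
                - (if (∑ j, c j * p.1 j) = p.2 then (1:ℝ) else 0)))) := by
            rw [Finset.prod_const, card_univ, Fintype.card_fin]
          rw [hpow, Finset.prod_univ_sum]
      _ ≤ (1 - ε^2/4)^m := pow_le_pow_left₀ hEwnn hEw m
      _ ≤ (Real.exp (-(ε^2/4)))^m := by
          have h1 : (0:ℝ) ≤ 1 - ε^2/4 := by nlinarith
          have h2 : (1:ℝ) - ε^2/4 ≤ Real.exp (-(ε^2/4)) := by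
            linarith [Real.add_one_le_exp (-(ε^2/4))]
          exact pow_le_pow_left₀ h1 h2 m
      _ = Real.exp ((m:ℝ) * (-(ε^2/4))) := (Real.exp_nat_mul _ m).symm
      _ ≤ δ := by
          rw [← Real.exp_log hδ]
          apply Real.exp_le_exp.mpr
          have hε2 : (0:ℝ) < ε^2 := by positivity
          have hmm : 4 * Real.log (2/δ) ≤ (m:ℝ) * ε^2 := by
            have := (div_le_iff₀ hε2).mp hm
            linarith
          have hlog : Real.log (1/δ) ≤ Real.log (2/δ) := by
            apply Real.log_le_log (by positivity)
            gcongr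
            norm_num
          have hlog1 : Real.log (1/δ) = -Real.log δ := by
            rw [one_div, Real.log_inv]
          nlinarith
  -- conclusion
  have hsplit := Finset.sum_filter_add_sum_filter_not Finset.univ
    (fun s : Fin m → (Fin n → F) × F =>
      (Finset.univ.filter (fun i => (∑ j, c j * (s i).1 j) = (s i).2)).card <
      (Finset.univ.filter (fun i => (∑ j, a j * (s i).1 j) = (s i).2)).card)
    (fun s => ∏ i, D (s i))
  rw [htotal] at hsplit
  linarith
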